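/- arXiv:2504.04407 — 6 statements merged into one kernel-verified Lean document; each statement's English description precedes it below -/
import Mathlib

section
/- Let z be a point in the unit disk model of the hyperbolic plane (|z| < 1). The orthogonal projection of z onto the geodesic line with endpoints -1 and 1 equals (sqrt(|z|^2 + 2 Re(z) + 1) - sqrt(|z|^2 - 2 Re(z) + 1)) / (sqrt(|z|^2 + 2 Re(z) + 1) + sqrt(|z|^2 - 2 Re(z) + 1)), i.e., this value is the unique real point w in (-1,1) minimizing the hyperbolic distance from z to the real axis. -/
/-!
For real `w` one has `‖1 - z w̄‖² = 1 - 2 b w + c w²` with `b = Re z`, `c = ‖z‖²`, so up to the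
positive constant `1 - c` the function to minimize is `f w = (1 - 2 b w + c w²) / (1 - w²)`.
If `w₀` solves the critical-point equation `b (1 + w₀²) = (c + 1) w₀`, then
`f w - f w₀ = (c + 1) (w - w₀)² / ((1 + w₀²) (1 - w²))`, which is positive on `(-1, 1)` away
from `w₀`. Since `‖z ± 1‖² = c ± 2 b + 1`, the given point is
`w₀ = (‖z + 1‖ - ‖z - 1‖) / (‖z + 1‖ + ‖z - 1‖)`, which lies in `(-1, 1)` and solves that equation.
-/

open Set

namespace Complex

theorem sq_norm_add_one (z : ℂ) : ‖z + 1‖ ^ 2 = ‖z‖ ^ 2 + 2 * z.re + 1 := by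
  simp only [Complex.sq_norm, normSq_apply, add_re, add_im, one_re, one_im]
  ring

theorem sq_norm_sub_one (z : ℂ) : ‖z - 1‖ ^ 2 = ‖z‖ ^ 2 - 2 * z.re + 1 := by
  simp only [Complex.sq_norm, normSq_apply, sub_re, sub_im, one_re, one_im]
  ring

theorem sq_norm_one_sub_mul_conj_ofReal (z : ℂ) (w : ℝ) :
    ‖1 - z * (starRingEnd ℂ) (w : ℂ)‖ ^ 2 = 1 - 2 * z.re * w + ‖z‖ ^ 2 * w ^ 2 := by
  rw [conj_ofReal, Complex.sq_norm, Complex.sq_norm, normSq_apply, normSq_apply]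
  simp only [sub_re, sub_im, mul_re, mul_im, one_re, one_im, ofReal_re, ofReal_im]
  ring

end Complex

theorem sub_div_add_mem_Ioo {A B : ℝ} (hA : 0 < A) (hB : 0 < B) :
    (A - B) / (A + B) ∈ Ioo (-1 : ℝ) 1 := by
  have hAB : 0 < A + B := add_pos hA hB
  constructor
  · rw [lt_div_iff₀ hAB]; linarith
  · rw [div_lt_one hAB]; linarith

theorem mul_one_add_sq_sub_div_add {A B b c : ℝ} (hA : A ^ 2 = c + 2 * b + 1)
    (hB : B ^ 2 = c - 2 * b + 1) (hAB : A + B ≠ 0) :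
    b * (1 + ((A - B) / (A + B)) ^ 2) = (c + 1) * ((A - B) / (A + B)) := by
  field_simp
  linear_combination (2 * b - (c + 1)) * hA + (2 * b + (c + 1)) * hB

section CriticalPoint

variable {b c k w₀ w : ℝ}

theorem quadratic_div_one_sub_sq_sub_of_critical (hcrit : b * (1 + w₀ ^ 2) = (c + 1) * w₀)
    (hk : k ≠ 0) (hw₀ : 1 - w₀ ^ 2 ≠ 0) (hw : 1 - w ^ 2 ≠ 0) :
    (1 - 2 * b * w + c * w ^ 2) / (k * (1 - w ^ 2)) -
        (1 - 2 * b * w₀ + c * w₀ ^ 2) / (k * (1 - w₀ ^ 2)) =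
      (c + 1) * (w - w₀) ^ 2 / (k * (1 + w₀ ^ 2) * (1 - w ^ 2)) := by
  have hw₀' : 1 + w₀ ^ 2 ≠ 0 := by positivity
  field_simp
  linear_combination (-2 * (w - w₀) * (1 + w * w₀)) * hcrit

theorem quadratic_div_one_sub_sq_isMinOn_of_critical
    (hcrit : b * (1 + w₀ ^ 2) = (c + 1) * w₀) (hc : -1 < c) (hk : 0 < k)
    (hw₀ : w₀ ∈ Ioo (-1 : ℝ) 1) (hw : w ∈ Ioo (-1 : ℝ) 1) :
    (1 - 2 * b * w₀ + c * w₀ ^ 2) / (k * (1 - w₀ ^ 2)) ≤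
        (1 - 2 * b * w + c * w ^ 2) / (k * (1 - w ^ 2)) ∧
      ((1 - 2 * b * w + c * w ^ 2) / (k * (1 - w ^ 2)) =
          (1 - 2 * b * w₀ + c * w₀ ^ 2) / (k * (1 - w₀ ^ 2)) → w = w₀) := by
  have hw₀' : 0 < 1 - w₀ ^ 2 := by nlinarith [hw₀.1, hw₀.2]
  have hw' : 0 < 1 - w ^ 2 := by nlinarith [hw.1, hw.2]
  have hdiff := quadratic_div_one_sub_sq_sub_of_critical hcrit hk.ne' hw₀'.ne' hw'.ne'
  have hc' : 0 < c + 1 := by linarith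
  have hden : 0 < k * (1 + w₀ ^ 2) * (1 - w ^ 2) := by positivity
  refine ⟨sub_nonneg.mp (hdiff ▸ by positivity), fun heq => ?_⟩
  rw [heq, sub_self, eq_comm, div_eq_zero_iff, or_iff_left hden.ne'] at hdiff
  simpa [hc'.ne', sub_eq_zero] using hdiff

end CriticalPoint

/-- The orthogonal projection of a point `z` of the unit disk onto the geodesic `(-1,1)`
(the real diameter) is the unique real point `w ∈ (-1,1)` minimizing the hyperbolic
distance from `z`, where the distance is encoded by
`cosh²(d(z,w)/2) = |1 - z w̄|² / ((1-|z|²)(1-|w|²))`. -/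
theorem stmt_0 (z : ℂ) (hz : ‖z‖ < 1) :
    let w₀ : ℝ := (Real.sqrt (‖z‖ ^ 2 + 2 * z.re + 1) -
        Real.sqrt (‖z‖ ^ 2 - 2 * z.re + 1)) /
      (Real.sqrt (‖z‖ ^ 2 + 2 * z.re + 1) +
        Real.sqrt (‖z‖ ^ 2 - 2 * z.re + 1))
    let D : ℝ → ℝ := fun w =>
      ‖1 - z * (starRingEnd ℂ) (w : ℂ)‖ ^ 2 /
        ((1 - ‖z‖ ^ 2) * (1 - w ^ 2))
    w₀ ∈ Set.Ioo (-1 : ℝ) 1 ∧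
      ∀ w ∈ Set.Ioo (-1 : ℝ) 1, D w₀ ≤ D w ∧ (D w = D w₀ → w = w₀) := by
  intro w₀ D
  have hplus : 0 < ‖z + 1‖ := norm_pos_iff.mpr fun h => by
    simp [eq_neg_of_add_eq_zero_left h] at hz
  have hminus : 0 < ‖z - 1‖ := norm_pos_iff.mpr fun h => by
    simp [sub_eq_zero.mp h] at hz
  have hw₀ : w₀ = (‖z + 1‖ - ‖z - 1‖) / (‖z + 1‖ + ‖z - 1‖) := by
    simp only [w₀, ← Complex.sq_norm_add_one, ← Complex.sq_norm_sub_one,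
      Real.sqrt_sq (norm_nonneg _)]
  have hmem : w₀ ∈ Ioo (-1 : ℝ) 1 := hw₀ ▸ sub_div_add_mem_Ioo hplus hminus
  have hcrit : z.re * (1 + w₀ ^ 2) = (‖z‖ ^ 2 + 1) * w₀ := hw₀ ▸
    mul_one_add_sq_sub_div_add (Complex.sq_norm_add_one z) (Complex.sq_norm_sub_one z)
      (add_pos hplus hminus).ne'
  refine ⟨hmem, fun w hw => ?_⟩
  simp only [D, Complex.sq_norm_one_sub_mul_conj_ofReal]
  exact quadratic_div_one_sub_sq_isMinOn_of_critical hcrit (by nlinarith [norm_nonneg z])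
    (by nlinarith [norm_nonneg z]) hmem hw
end

section
/- Let r1 >= r2 > 1, r3 > 1, alpha in [0, 2pi]. A complex hyperbolic ultra-parallel [m1, m2, m3]-triangle group (with rj = cosh(mj/2), sj = sinh(mj/2), m3 > 0) exists if and only if cos(alpha) <= (r1^2 + r2^2 + r3^2 - 1)/(2 r1 r2 r3). Concretely: the real number z1^2 := |s3^{-1}(r1 r3 - r2 e^{-i alpha})|^2 - r1^2 + 1 is nonnegative if and only if cos(alpha) <= (r1^2 + r2^2 + r3^2 - 1)/(2 r1 r2 r3). -/
open Complex

theorem Complex.sq_norm_ofReal_sub_mul_exp_mul_I (a b θ : ℝ) :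
    ‖(a : ℂ) - b * exp (θ * I)‖ ^ 2 = a ^ 2 - 2 * a * b * Real.cos θ + b ^ 2 := by
  have hre : ((a : ℂ) - b * exp (θ * I)).re = a - b * Real.cos θ := by
    simp [exp_ofReal_mul_I_re]
  have him : ((a : ℂ) - b * exp (θ * I)).im = -(b * Real.sin θ) := by
    simp [exp_ofReal_mul_I_im]
  rw [Complex.sq_norm, normSq_apply, hre, him]
  nlinarith [Real.sin_sq_add_cos_sq θ]

theorem Complex.sq_norm_ofReal_inv_mul (s : ℝ) (w : ℂ) :
    ‖(s : ℂ)⁻¹ * w‖ ^ 2 = ‖w‖ ^ 2 / s ^ 2 := by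
  rw [norm_mul, norm_inv, norm_real, Real.norm_eq_abs, mul_pow, inv_pow, sq_abs, inv_mul_eq_div]

theorem div_sub_sq_add_one_nonneg_iff {r1 r2 r3 : ℝ} (c : ℝ) (h3 : 1 < r3 ^ 2)
    (hr : 0 < r1 * r2 * r3) :
    0 ≤ (r1 ^ 2 * r3 ^ 2 - 2 * r1 * r2 * r3 * c + r2 ^ 2) / (r3 ^ 2 - 1) - r1 ^ 2 + 1 ↔
      c ≤ (r1 ^ 2 + r2 ^ 2 + r3 ^ 2 - 1) / (2 * r1 * r2 * r3) := by
  have key : (r1 ^ 2 * r3 ^ 2 - 2 * r1 * r2 * r3 * c + r2 ^ 2) - (r1 ^ 2 - 1) * (r3 ^ 2 - 1) =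
      (r1 ^ 2 + r2 ^ 2 + r3 ^ 2 - 1) - c * (2 * r1 * r2 * r3) := by ring
  rw [sub_add, sub_nonneg, le_div_iff₀ (by linarith), le_div_iff₀ (by linarith)]
  constructor <;> intro h <;> linarith

theorem stmt_5_general (r1 r2 r3 s3 α : ℝ) (h12 : r2 ≤ r1) (h2 : 1 < r2) (h3 : 1 < r3)
    (hrs : r3 ^ 2 - s3 ^ 2 = 1) :
    0 ≤ (‖(s3 : ℂ)⁻¹ *
        ((r1 : ℂ) * r3 - r2 * Complex.exp (-(α * Complex.I)))‖) ^ 2 - r1 ^ 2 + 1 ↔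
      Real.cos α ≤ (r1 ^ 2 + r2 ^ 2 + r3 ^ 2 - 1) / (2 * r1 * r2 * r3) := by
  have hs3 : s3 ^ 2 = r3 ^ 2 - 1 := by linarith
  have hexp : -((α : ℂ) * I) = ((-α : ℝ) : ℂ) * I := by push_cast; ring
  have hr : 0 < r1 * r2 * r3 := by have := h2.trans_le h12; positivity
  rw [Complex.sq_norm_ofReal_inv_mul, hexp, ← ofReal_mul,
    Complex.sq_norm_ofReal_sub_mul_exp_mul_I, Real.cos_neg, hs3]
  convert div_sub_sq_add_one_nonneg_iff (Real.cos α) (by nlinarith) hr using 3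
  ring

/-- Existence criterion: `z₁² = |s₃⁻¹(r₁r₃ - r₂e^{-iα})|² - r₁² + 1 ≥ 0` if and only if
`cos α ≤ (r₁²+r₂²+r₃²-1)/(2r₁r₂r₃)`. -/
theorem stmt_5 (r1 r2 r3 s3 α : ℝ) (h12 : r2 ≤ r1) (h2 : 1 < r2) (h3 : 1 < r3)
    (hs : 0 < s3) (hrs : r3 ^ 2 - s3 ^ 2 = 1) (hα : α ∈ Set.Icc 0 (2 * Real.pi)) :
    0 ≤ (‖(s3 : ℂ)⁻¹ *
        ((r1 : ℂ) * r3 - r2 * Complex.exp (-(α * Complex.I)))‖) ^ 2 - r1 ^ 2 + 1 ↔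
      Real.cos α ≤ (r1 ^ 2 + r2 ^ 2 + r3 ^ 2 - 1) / (2 * r1 * r2 * r3) :=
  stmt_5_general r1 r2 r3 s3 α h12 h2 h3 hrs
end

section
/- Let r1 >= r2 > 1 and define X = (r1^2 - 1)/(r2^2 - 1) - 1 >= 0 and Y = 1/(r2^2 - 1) > 0, so r1 = sqrt(1 + (X+1)/Y) and r2 = sqrt(1 + 1/Y). With t_n as in the previous statement, for n >= 2 one has t_{n-1} - t_n = (X(1-n) + 2) / (2 n (n^2 - 1) sqrt((1+Y)(1+X+Y))). In particular, t_n <= t_{n-1} if and only if X <= 2/(n-1). -/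
/-!
Writing the numerator of `tₖ` as `r₁² k² + r₂² (k+1)² - 1` and splitting into partial fractions,
`2 r₁ r₂ n (n² - 1) (t_{n-1} - tₙ) = (r₂² - 1)(n + 1) - (r₁² - 1)(n - 1)`,
which is `(r₂² - 1)(X(1 - n) + 2)`. In the coordinates `X, Y` one has `1 + Y = r₂²/(r₂² - 1)` and
`1 + X + Y = r₁²/(r₂² - 1)`, so the square root is `r₁ r₂/(r₂² - 1)`. The denominator is positive,
so the sign of `t_{n-1} - tₙ` is that of `X(1 - n) + 2`.
-/

noncomputable def tCoeff (r1 r2 x : ℝ) : ℝ :=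
  ((r1 ^ 2 + r2 ^ 2) * x ^ 2 + r2 ^ 2 * (2 * x + 1) - 1) / (2 * r1 * r2 * x * (x + 1))

lemma tCoeff_sub_one_sub_tCoeff {r1 r2 x : ℝ} (hr1 : r1 ≠ 0) (hr2 : r2 ≠ 0) (hx0 : x ≠ 0)
    (hx1 : x - 1 ≠ 0) (hx1' : x + 1 ≠ 0) :
    tCoeff r1 r2 (x - 1) - tCoeff r1 r2 x =
      ((r2 ^ 2 - 1) * (x + 1) - (r1 ^ 2 - 1) * (x - 1)) / (2 * r1 * r2 * x * (x ^ 2 - 1)) := by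
  have hx2 : x ^ 2 - 1 ≠ 0 := by
    rw [show x ^ 2 - 1 = (x - 1) * (x + 1) by ring]
    exact mul_ne_zero hx1 hx1'
  unfold tCoeff
  rw [sub_add_cancel]
  field_simp
  ring

lemma sqrt_one_add_mul_one_add_add {r1 r2 X Y : ℝ} (hr1 : 0 < r1) (hr2 : 1 < r2)
    (hX : X = (r1 ^ 2 - 1) / (r2 ^ 2 - 1) - 1) (hY : Y = 1 / (r2 ^ 2 - 1)) :
    Real.sqrt ((1 + Y) * (1 + X + Y)) = r1 * r2 / (r2 ^ 2 - 1) := by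
  have hs : 0 < r2 ^ 2 - 1 := by nlinarith
  have hsq : (1 + Y) * (1 + X + Y) = (r1 * r2 / (r2 ^ 2 - 1)) ^ 2 := by
    subst hX hY
    field_simp
    ring
  rw [hsq, Real.sqrt_sq (by positivity)]

/-- In coordinates `X = (r₁²-1)/(r₂²-1) - 1`, `Y = 1/(r₂²-1)`, for `n ≥ 2`:
`t_{n-1} - tₙ = (X(1-n)+2)/(2n(n²-1)√((1+Y)(1+X+Y)))`; in particular
`tₙ ≤ t_{n-1}` if and only if `X ≤ 2/(n-1)`. -/
theorem stmt_9 (r1 r2 X Y : ℝ) (h12 : r2 ≤ r1) (h2 : 1 < r2)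
    (hX : X = (r1 ^ 2 - 1) / (r2 ^ 2 - 1) - 1) (hY : Y = 1 / (r2 ^ 2 - 1))
    (n : ℕ) (hn : 2 ≤ n) :
    let t : ℕ → ℝ := fun k =>
      ((r1 ^ 2 + r2 ^ 2) * (k : ℝ) ^ 2 + r2 ^ 2 * (2 * (k : ℝ) + 1) - 1) /
        (2 * r1 * r2 * (k : ℝ) * ((k : ℝ) + 1))
    t (n - 1) - t n =
      (X * (1 - (n : ℝ)) + 2) /
        (2 * (n : ℝ) * ((n : ℝ) ^ 2 - 1) * Real.sqrt ((1 + Y) * (1 + X + Y))) ∧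
    (t n ≤ t (n - 1) ↔ X ≤ 2 / ((n : ℝ) - 1)) := by
  intro t
  have hr1 : 0 < r1 := by linarith
  have hs : 0 < r2 ^ 2 - 1 := by nlinarith
  have hn1 : (1 : ℝ) < n := by exact_mod_cast hn
  have hsqrt := sqrt_one_add_mul_one_add_add hr1 h2 hX hY
  have hdenom : 0 < 2 * (n : ℝ) * ((n : ℝ) ^ 2 - 1) * Real.sqrt ((1 + Y) * (1 + X + Y)) := by
    have : (0 : ℝ) < (n : ℝ) ^ 2 - 1 := by nlinarith
    rw [hsqrt]
    positivity
  have hdiff : t (n - 1) - t n =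
      (X * (1 - (n : ℝ)) + 2) /
        (2 * (n : ℝ) * ((n : ℝ) ^ 2 - 1) * Real.sqrt ((1 + Y) * (1 + X + Y))) := by
    change tCoeff r1 r2 ((n - 1 : ℕ) : ℝ) - tCoeff r1 r2 n = _
    rw [Nat.cast_sub (by omega), Nat.cast_one, tCoeff_sub_one_sub_tCoeff hr1.ne' (by positivity)
      (by positivity) (by linarith) (by positivity), hsqrt, hX]
    field_simp
    ring
  refine ⟨hdiff, ?_⟩
  rw [← sub_nonneg, hdiff, le_div_iff₀ hdenom, zero_mul, le_div_iff₀ (by linarith)]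
  constructor <;> intro h <;> linarith
end

section
/- Let r1 >= r2 > 1 and n a positive integer with 2/n <= X <= 2/(n-1) (the upper bound omitted when n = 1), where X = (r1^2-1)/(r2^2-1) - 1. Then t_n <= t_m for every positive integer m != n, where t_k = ((r1^2 + r2^2) k^2 + r2^2 (2k+1) - 1)/(2 r1 r2 k (k+1)). -/
/-!
The forward difference of `t` factors as
`t (k+1) - t k = (k (r₁² - r₂²) - 2 (r₂² - 1)) / (2 r₁ r₂ k (k+1) (k+2))`,
so for `r₁ ≥ r₂ > 1` the sequence decreases while `k ≤ 2/X` and increases once `k ≥ 2/X`.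
The hypotheses on `X` say exactly that `n - 1 ≤ 2/X ≤ n`, so `t` is antitone on `[1, n]` and
monotone on `[n, ∞)`.
-/

open Set

noncomputable def ratioSeq (r1 r2 : ℝ) (k : ℕ) : ℝ :=
  ((r1 ^ 2 + r2 ^ 2) * (k : ℝ) ^ 2 + r2 ^ 2 * (2 * (k : ℝ) + 1) - 1) /
    (2 * r1 * r2 * (k : ℝ) * ((k : ℝ) + 1))

namespace ratioSeq

variable {r1 r2 : ℝ}

theorem succ_sub (hr1 : r1 ≠ 0) (hr2 : r2 ≠ 0) {k : ℕ} (hk : 0 < k) :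
    ratioSeq r1 r2 (k + 1) - ratioSeq r1 r2 k =
      ((k : ℝ) * (r1 ^ 2 - r2 ^ 2) - 2 * (r2 ^ 2 - 1)) /
        (2 * r1 * r2 * (k : ℝ) * ((k : ℝ) + 1) * ((k : ℝ) + 2)) := by
  have hk' : (k : ℝ) ≠ 0 := by positivity
  unfold ratioSeq
  push_cast
  field_simp
  ring

theorem le_succ_iff (hr1 : 0 < r1) (hr2 : 0 < r2) {k : ℕ} (hk : 0 < k) :
    ratioSeq r1 r2 k ≤ ratioSeq r1 r2 (k + 1) ↔
      2 * (r2 ^ 2 - 1) ≤ (k : ℝ) * (r1 ^ 2 - r2 ^ 2) := by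
  have hden : 0 < 2 * r1 * r2 * (k : ℝ) * ((k : ℝ) + 1) * ((k : ℝ) + 2) := by positivity
  rw [← sub_nonneg, succ_sub hr1.ne' hr2.ne' hk, le_div_iff₀ hden, zero_mul, sub_nonneg]

theorem succ_le_iff (hr1 : 0 < r1) (hr2 : 0 < r2) {k : ℕ} (hk : 0 < k) :
    ratioSeq r1 r2 (k + 1) ≤ ratioSeq r1 r2 k ↔
      (k : ℝ) * (r1 ^ 2 - r2 ^ 2) ≤ 2 * (r2 ^ 2 - 1) := by
  have hden : 0 < 2 * r1 * r2 * (k : ℝ) * ((k : ℝ) + 1) * ((k : ℝ) + 2) := by positivity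
  rw [← sub_nonpos, succ_sub hr1.ne' hr2.ne' hk, div_le_iff₀ hden, zero_mul, sub_nonpos]

variable (hr1 : 0 < r1) (hr2 : 0 < r2) (hD : r2 ^ 2 ≤ r1 ^ 2) {n : ℕ}
include hr1 hr2 hD

theorem antitoneOn_Icc (hn : ((n : ℝ) - 1) * (r1 ^ 2 - r2 ^ 2) ≤ 2 * (r2 ^ 2 - 1)) :
    AntitoneOn (ratioSeq r1 r2) (Icc 1 n) := by
  refine antitoneOn_of_succ_le ordConnected_Icc fun k _ hk hk1 ↦ ?_
  rw [Order.succ_eq_add_one] at hk1 ⊢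
  have hkn : (k : ℝ) ≤ n - 1 := by
    rw [le_sub_iff_add_le]
    exact_mod_cast hk1.2
  rw [succ_le_iff hr1 hr2 hk.1]
  nlinarith

theorem monotoneOn_Ici (hn : 0 < n) (hnD : 2 * (r2 ^ 2 - 1) ≤ (n : ℝ) * (r1 ^ 2 - r2 ^ 2)) :
    MonotoneOn (ratioSeq r1 r2) (Ici n) := by
  refine monotoneOn_of_le_succ ordConnected_Ici fun k _ hk _ ↦ ?_
  rw [Order.succ_eq_add_one]
  have hnk : (n : ℝ) ≤ k := by exact_mod_cast hk
  rw [le_succ_iff hr1 hr2 (hn.trans_le hk)]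
  nlinarith

end ratioSeq

/-- If `2/n ≤ X ≤ 2/(n-1)` (upper bound omitted when `n = 1`), where
`X = (r₁²-1)/(r₂²-1) - 1`, then `tₙ ≤ tₘ` for every positive integer `m ≠ n`. -/
theorem stmt_10 (r1 r2 X : ℝ) (h12 : r2 ≤ r1) (h2 : 1 < r2)
    (hX : X = (r1 ^ 2 - 1) / (r2 ^ 2 - 1) - 1) (n : ℕ) (hn : 0 < n)
    (hlo : 2 / (n : ℝ) ≤ X) (hhi : 2 ≤ n → X ≤ 2 / ((n : ℝ) - 1)) :
    let t : ℕ → ℝ := fun k =>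
      ((r1 ^ 2 + r2 ^ 2) * (k : ℝ) ^ 2 + r2 ^ 2 * (2 * (k : ℝ) + 1) - 1) /
        (2 * r1 * r2 * (k : ℝ) * ((k : ℝ) + 1))
    ∀ m : ℕ, 0 < m → m ≠ n → t n ≤ t m := by
  intro t m hm _
  change ratioSeq r1 r2 n ≤ ratioSeq r1 r2 m
  have hr2 : 0 < r2 := by linarith
  have hr1 : 0 < r1 := by linarith
  have hE : 0 < r2 ^ 2 - 1 := by nlinarith
  have hD : r2 ^ 2 ≤ r1 ^ 2 := by nlinarith
  have hXq : X = (r1 ^ 2 - r2 ^ 2) / (r2 ^ 2 - 1) := by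
    rw [hX]
    field_simp
    ring
  rcases lt_or_ge m n with hmn | hnm
  · have hn2 : 2 ≤ n := by omega
    have hn1 : (0 : ℝ) < n - 1 := by
      rw [sub_pos]
      exact_mod_cast hn2
    have hup := hhi hn2
    rw [hXq, div_le_div_iff₀ hE hn1] at hup
    exact ratioSeq.antitoneOn_Icc hr1 hr2 hD (by linarith) ⟨hm, hmn.le⟩ ⟨hn, le_rfl⟩ hmn.le
  · rw [hXq, div_le_div_iff₀ (by exact_mod_cast hn) hE] at hlo
    exact ratioSeq.monotoneOn_Ici hr1 hr2 hD hn (by linarith) self_mem_Ici hnm hnm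
end

section
/- In the Heisenberg group H = C x R with group law [z1,t1]*[z2,t2] = [z1+z2, t1+t2+2 Im(z1 conj(z2))] and Cygan metric rho0([z1,t1],[z2,t2]) = | |z1-z2|^2 - i t1 + i t2 - 2 i Im(z1 conj(z2)) |^{1/2}, let o = [0,0], r1 >= r2 > 0, theta real, and q = [2(r1 e^{-i theta} + r2 e^{i theta}), -8 r1 r2 sin(2 theta)]. Then rho0(o, q)^4 = (4|r1 e^{-i theta} + r2 e^{i theta}|^2)^2 + 64 r1^2 r2^2 sin^2(2 theta), and the inequality rho0(o,q)^4 >= 16 is equivalent to 8 r1 r2 (r1^2 + r2^2) cos^2(theta) + r1^4 - 4 r1^3 r2 + 6 r1^2 r2^2 - 4 r1 r2^3 + r2^4 - 1 >= 0. -/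
/-!
The Cygan gauge of `[ζ, t]` is `(‖ζ‖⁴ + t²)^{1/4}`. Here `‖ζ‖² = 4(r₁² + r₂² + 2r₁r₂ cos 2θ)`
and `t² = 64r₁²r₂² sin² 2θ`, so `cos² 2θ + sin² 2θ = 1` and `cos 2θ = 2cos²θ - 1` give
`ρ₀(o, q)⁴ = 16((r₁ - r₂)⁴ + 8r₁r₂(r₁² + r₂²)cos²θ)`.
-/

open Complex

noncomputable def cyganDist (p q : ℂ × ℝ) : ℝ :=
  Real.sqrt ‖((‖p.1 - q.1‖ ^ 2 : ℝ) : ℂ) - I * (p.2 : ℂ) + I * (q.2 : ℂ)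
    - 2 * I * (((p.1 * starRingEnd ℂ q.1).im : ℝ) : ℂ)‖

theorem cyganDist_pow_four (p q : ℂ × ℝ) :
    cyganDist p q ^ 4 =
      ‖p.1 - q.1‖ ^ 4 + (q.2 - p.2 - 2 * (p.1 * starRingEnd ℂ q.1).im) ^ 2 := by
  rw [cyganDist, show (4 : ℕ) = 2 * 2 from rfl, pow_mul, Real.sq_sqrt (norm_nonneg _),
    Complex.sq_norm, Complex.normSq_apply]
  simp only [sub_re, add_re, sub_im, add_im, mul_re, mul_im, ofReal_re, ofReal_im, I_re, I_im,
    re_ofNat, im_ofNat]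
  ring

theorem cyganDist_zero_pow_four (ζ : ℂ) (t : ℝ) :
    cyganDist (0, 0) (ζ, t) ^ 4 = ‖ζ‖ ^ 4 + t ^ 2 := by
  simp [cyganDist_pow_four]

theorem norm_sq_mul_exp_neg_add_mul_exp (a b θ : ℝ) :
    ‖(a : ℂ) * exp (-(θ * I)) + (b : ℂ) * exp (θ * I)‖ ^ 2
      = a ^ 2 + b ^ 2 + 2 * a * b * Real.cos (2 * θ) := by
  rw [Complex.sq_norm, Complex.normSq_apply]
  simp only [add_re, mul_re, ofReal_re, exp_re, neg_re, I_re, mul_zero, ofReal_im, I_im, mul_one,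
    sub_self, neg_zero, Real.exp_zero, neg_im, mul_im, add_zero, Real.cos_neg, one_mul, exp_im,
    Real.sin_neg, mul_neg, zero_mul, sub_zero, add_im, Real.cos_two_mul]
  linear_combination (a - b) ^ 2 * Real.sin_sq_add_cos_sq θ

theorem sq_four_mul_add_sin_two_mul_sq (a b θ : ℝ) :
    (4 * (a ^ 2 + b ^ 2 + 2 * a * b * Real.cos (2 * θ))) ^ 2
        + 64 * a ^ 2 * b ^ 2 * Real.sin (2 * θ) ^ 2
      = 16 * ((a - b) ^ 4 + 8 * a * b * (a ^ 2 + b ^ 2) * Real.cos θ ^ 2) := by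
  linear_combination 64 * a ^ 2 * b ^ 2 * Real.sin_sq_add_cos_sq (2 * θ)
    + 64 * a * b * (a ^ 2 + b ^ 2) * Real.cos_two_mul θ

theorem stmt_11_general (r1 r2 θ : ℝ) :
    let ζ : ℂ := 2 * ((r1 : ℂ) * Complex.exp (-(θ * Complex.I)) +
      (r2 : ℂ) * Complex.exp (θ * Complex.I))
    let t : ℝ := -8 * r1 * r2 * Real.sin (2 * θ)
    -- Cygan distance ρ₀(o, q) for o = [0,0], q = [ζ, t]
    let ρ0 : ℝ := Real.sqrt (‖
      ((((‖0 - ζ‖) ^ 2 : ℝ) : ℂ) - Complex.I * (0 : ℝ) + Complex.I * (t : ℝ)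
        - 2 * Complex.I * ((((0 : ℂ) * (starRingEnd ℂ) ζ).im : ℝ) : ℂ))‖)
    ρ0 ^ 4 = (4 * (‖((r1 : ℂ) * Complex.exp (-(θ * Complex.I)) +
        (r2 : ℂ) * Complex.exp (θ * Complex.I))‖) ^ 2) ^ 2 +
        64 * r1 ^ 2 * r2 ^ 2 * (Real.sin (2 * θ)) ^ 2 ∧
    (16 ≤ ρ0 ^ 4 ↔
      0 ≤ 8 * r1 * r2 * (r1 ^ 2 + r2 ^ 2) * (Real.cos θ) ^ 2 + r1 ^ 4 - 4 * r1 ^ 3 * r2 +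
        6 * r1 ^ 2 * r2 ^ 2 - 4 * r1 * r2 ^ 3 + r2 ^ 4 - 1) := by
  intro ζ t ρ0
  set w : ℂ := (r1 : ℂ) * exp (-(θ * I)) + (r2 : ℂ) * exp (θ * I)
  have hρ : ρ0 ^ 4 = ‖ζ‖ ^ 4 + t ^ 2 := cyganDist_zero_pow_four ζ t
  have hζ : ‖ζ‖ = 2 * ‖w‖ := by simp [ζ, w]
  have hgauge : ρ0 ^ 4 = (4 * ‖w‖ ^ 2) ^ 2 + 64 * r1 ^ 2 * r2 ^ 2 * Real.sin (2 * θ) ^ 2 := by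
    rw [hρ, hζ]
    ring
  refine ⟨hgauge, ?_⟩
  rw [hgauge, norm_sq_mul_exp_neg_add_mul_exp, sq_four_mul_add_sin_two_mul_sq]
  constructor <;> intro h <;> linarith

/-- In the Heisenberg group with the Cygan metric, for `o = [0,0]` and
`q = [2(r₁e^{-iθ} + r₂e^{iθ}), -8r₁r₂sin(2θ)]`:
`ρ₀(o,q)⁴ = (4|r₁e^{-iθ}+r₂e^{iθ}|²)² + 64r₁²r₂²sin²(2θ)`, and `ρ₀(o,q)⁴ ≥ 16` iff
`8r₁r₂(r₁²+r₂²)cos²θ + r₁⁴ - 4r₁³r₂ + 6r₁²r₂² - 4r₁r₂³ + r₂⁴ - 1 ≥ 0`. -/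
theorem stmt_11 (r1 r2 θ : ℝ) (h12 : r2 ≤ r1) (h2 : 0 < r2) :
    let ζ : ℂ := 2 * ((r1 : ℂ) * Complex.exp (-(θ * Complex.I)) +
      (r2 : ℂ) * Complex.exp (θ * Complex.I))
    let t : ℝ := -8 * r1 * r2 * Real.sin (2 * θ)
    -- Cygan distance ρ₀(o, q) for o = [0,0], q = [ζ, t]
    let ρ0 : ℝ := Real.sqrt (‖
      ((((‖0 - ζ‖) ^ 2 : ℝ) : ℂ) - Complex.I * (0 : ℝ) + Complex.I * (t : ℝ)
        - 2 * Complex.I * ((((0 : ℂ) * (starRingEnd ℂ) ζ).im : ℝ) : ℂ))‖)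
    ρ0 ^ 4 = (4 * (‖((r1 : ℂ) * Complex.exp (-(θ * Complex.I)) +
        (r2 : ℂ) * Complex.exp (θ * Complex.I))‖) ^ 2) ^ 2 +
        64 * r1 ^ 2 * r2 ^ 2 * (Real.sin (2 * θ)) ^ 2 ∧
    (16 ≤ ρ0 ^ 4 ↔
      0 ≤ 8 * r1 * r2 * (r1 ^ 2 + r2 ^ 2) * (Real.cos θ) ^ 2 + r1 ^ 4 - 4 * r1 ^ 3 * r2 +
        6 * r1 ^ 2 * r2 ^ 2 - 4 * r1 * r2 ^ 3 + r2 ^ 4 - 1) :=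
  stmt_11_general r1 r2 θ
end

section
/- In the vector space C^{2,1} with Hermitian form <z,w> = z1 conj(w1) + z2 conj(w2) - z3 conj(w3), let n3 = (z1, r1, z3)^T, n2 = (0,1,0)^T, n1 = (0, r3, s3)^T with z1 real nonnegative, z3 = s3^{-1}(r1 r3 - r2 e^{-i alpha}), z1^2 = |z3|^2 - r1^2 + 1, where r1, r2, r3 > 1, s3 = sqrt(r3^2 - 1) > 0. Then <n1,n1> = <n2,n2> = <n3,n3> = 1, |<n3, n2>| = r1, |<n2, n1>| = r3, |<n1, n3>| = r2, and arg(<n1,n3><n2,n1><n3,n2>) = alpha (for alpha in (0, 2pi) with r1 r3 != r2 e^{-i alpha}). -/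
open ComplexConjugate

/-!
With `n₂ = e₂` the products `⟨n₃,n₂⟩ = r₁` and `⟨n₂,n₁⟩ = r₃` are read off directly, and
`⟨n₁,n₃⟩ = r₁r₃ - s₃ conj z₃` collapses to `r₂ e^{iα}` because `s₃ z₃ = r₁r₃ - r₂ e^{-iα}`.
The triple product is then `r₁r₂r₃ e^{iα}`, whose argument is `α` modulo `2π`.
-/

namespace Complex

theorem ofReal_mul_conj_eq_of_ofReal_mul_eq {s a b α : ℝ} {z : ℂ}
    (h : (s : ℂ) * z = a - b * exp (-(α * I))) :
    (s : ℂ) * conj z = a - b * exp (α * I) := by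
  simpa [← exp_conj] using congrArg conj h

theorem arg_ofReal_mul_exp_mul_I_coe_angle {r : ℝ} (hr : 0 < r) (θ : ℝ) :
    (arg (r * exp (θ * I)) : Real.Angle) = θ := by
  rw [arg_real_mul _ hr, arg_exp_mul_I, Real.Angle.coe_toIocMod]

end Complex

open Complex

theorem stmt_15_general (r1 r2 r3 s3 α : ℝ) (h1 : 1 < r1) (h2 : 1 < r2) (h3 : 1 < r3)
    (hs : 0 < s3) (hrs : r3 ^ 2 - s3 ^ 2 = 1) (z1 : ℝ)
    (z3 : ℂ) (hz3 : z3 = (s3 : ℂ)⁻¹ * ((r1 : ℂ) * r3 - r2 * Complex.exp (-(α * Complex.I))))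
    (hz1sq : z1 ^ 2 = ‖z3‖ ^ 2 - r1 ^ 2 + 1) :
    let herm : (Fin 3 → ℂ) → (Fin 3 → ℂ) → ℂ := fun z w =>
      z 0 * conj (w 0) + z 1 * conj (w 1) - z 2 * conj (w 2)
    let n3 : Fin 3 → ℂ := ![(z1 : ℂ), (r1 : ℂ), z3]
    let n2 : Fin 3 → ℂ := ![0, 1, 0]
    let n1 : Fin 3 → ℂ := ![0, (r3 : ℂ), (s3 : ℂ)]
    herm n1 n1 = 1 ∧ herm n2 n2 = 1 ∧ herm n3 n3 = 1 ∧
    ‖herm n3 n2‖ = r1 ∧ ‖herm n2 n1‖ = r3 ∧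
    ‖herm n1 n3‖ = r2 ∧
    ((Complex.arg (herm n1 n3 * herm n2 n1 * herm n3 n2) : Real.Angle) = (α : Real.Angle)) := by
  intro herm n3 n2 n1
  have hs3z3 : (s3 : ℂ) * z3 = ((r1 * r3 : ℝ) : ℂ) - r2 * exp (-(α * I)) := by
    rw [hz3, mul_inv_cancel_left₀ (ofReal_ne_zero.mpr hs.ne'), ofReal_mul]
  have h13 : herm n1 n3 = r2 * exp (α * I) := by
    simp only [herm, n1, n3, Matrix.cons_val_zero, Matrix.cons_val_one, Matrix.cons_val_two,
      Matrix.head_cons, Matrix.tail_cons, conj_ofReal]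
    rw [ofReal_mul_conj_eq_of_ofReal_mul_eq hs3z3]
    push_cast
    ring
  have h21 : herm n2 n1 = r3 := by simp [herm, n2, n1]
  have h32 : herm n3 n2 = r1 := by simp [herm, n3, n2]
  refine ⟨?_, by simp [herm, n2], ?_, ?_, ?_, ?_, ?_⟩
  · simp only [herm, n1, Matrix.cons_val_zero, Matrix.cons_val_one, Matrix.cons_val_two,
      Matrix.head_cons, Matrix.tail_cons, conj_ofReal, zero_mul, zero_add]
    rw [← sq, ← sq]
    exact_mod_cast hrs
  · simp only [herm, n3, Matrix.cons_val_zero, Matrix.cons_val_one, Matrix.cons_val_two,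
      Matrix.head_cons, Matrix.tail_cons, conj_ofReal, mul_conj, normSq_eq_norm_sq]
    have hnorm : z1 ^ 2 + r1 ^ 2 - ‖z3‖ ^ 2 = 1 := by linarith
    rw [← sq, ← sq]
    exact_mod_cast hnorm
  · rw [h32, norm_real, Real.norm_of_nonneg (by linarith)]
  · rw [h21, norm_real, Real.norm_of_nonneg (by linarith)]
  · rw [h13, norm_mul, norm_exp_ofReal_mul_I, norm_real, Real.norm_of_nonneg (by linarith),
      mul_one]
  · have hprod : (r2 * exp (α * I) * r3 * r1 : ℂ) = ((r1 * r2 * r3 : ℝ) : ℂ) * exp (α * I) := by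
      push_cast
      ring
    rw [h13, h21, h32, hprod, arg_ofReal_mul_exp_mul_I_coe_angle (by positivity)]

/-- The normalized polar vectors `n₁, n₂, n₃` of the parameterization satisfy
`⟨nⱼ,nⱼ⟩ = 1`, `|⟨n₃,n₂⟩| = r₁`, `|⟨n₂,n₁⟩| = r₃`, `|⟨n₁,n₃⟩| = r₂`, and the angular
invariant `arg(⟨n₁,n₃⟩⟨n₂,n₁⟩⟨n₃,n₂⟩) = α` (as an angle mod 2π). -/
theorem stmt_15 (r1 r2 r3 s3 α : ℝ) (h1 : 1 < r1) (h2 : 1 < r2) (h3 : 1 < r3)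
    (hs : 0 < s3) (hrs : r3 ^ 2 - s3 ^ 2 = 1) (z1 : ℝ) (hz1 : 0 ≤ z1)
    (z3 : ℂ) (hz3 : z3 = (s3 : ℂ)⁻¹ * ((r1 : ℂ) * r3 - r2 * Complex.exp (-(α * Complex.I))))
    (hz1sq : z1 ^ 2 = ‖z3‖ ^ 2 - r1 ^ 2 + 1)
    (hα : α ∈ Set.Ioo 0 (2 * Real.pi))
    (hne : (r1 : ℂ) * r3 ≠ r2 * Complex.exp (-(α * Complex.I))) :
    let herm : (Fin 3 → ℂ) → (Fin 3 → ℂ) → ℂ := fun z w =>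
      z 0 * conj (w 0) + z 1 * conj (w 1) - z 2 * conj (w 2)
    let n3 : Fin 3 → ℂ := ![(z1 : ℂ), (r1 : ℂ), z3]
    let n2 : Fin 3 → ℂ := ![0, 1, 0]
    let n1 : Fin 3 → ℂ := ![0, (r3 : ℂ), (s3 : ℂ)]
    herm n1 n1 = 1 ∧ herm n2 n2 = 1 ∧ herm n3 n3 = 1 ∧
    ‖herm n3 n2‖ = r1 ∧ ‖herm n2 n1‖ = r3 ∧
    ‖herm n1 n3‖ = r2 ∧
    ((Complex.arg (herm n1 n3 * herm n2 n1 * herm n3 n2) : Real.Angle) = (α : Real.Angle)) :=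
  stmt_15_general r1 r2 r3 s3 α h1 h2 h3 hs hrs z1 z3 hz3 hz1sq
end
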